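/- arXiv:1106.0686 — 2 statements merged into one kernel-verified Lean document; each statement's English description precedes it below -/
import Mathlib

section
/- Let α ∈ (0,1), μ ≥ 0, and V₀ ∈ ℝ, and define V(t) = V₀ · E_α(−μ t^α) for t ≥ 0. Then V(0) = V₀, and for every t > 0 the function s ↦ ∫₀ˢ g_{1−α}(s−τ)(V(τ) − V₀) dτ is differentiable at t with derivative equal to −μ V(t). In other words, V solves the fractional relaxation equation ∂_t^α(V − V₀) + μV = 0 on (0,∞) with V(0) = V₀, where ∂_t^α denotes the Riemann–Liouville fractional derivative ∂_t^α u(t) = d/dt ∫₀ᵗ g_{1−α}(t−τ) u(τ) dτ. -/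
open MeasureTheory Set

/-- The Riemann–Liouville kernel `g_β(t) = t^(β-1)/Γ(β)`. -/
noncomputable def rlKernel (β t : ℝ) : ℝ := t ^ (β - 1) / Real.Gamma β

/-- The Mittag-Leffler function `E_α(x) = Σ_{k=0}^∞ x^k / Γ(αk+1)` (real argument). -/
noncomputable def mittagLeffler (α x : ℝ) : ℝ := ∑' k : ℕ, x ^ k / Real.Gamma (α * k + 1)

/-!
Expanding `E_α(a τ^α) - 1 = ∑ₖ a^(k+1) g_{α(k+1)+1}(τ)` and using the semigroup law
`g_β ⋆ g_γ = g_{β+γ}` of the Riemann–Liouville kernels (the Beta integral), the fractional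
integral `g_{1-α} ⋆ (E_α(a τ^α) - 1)` is `∑ₖ a^(k+1) g_{αk+2}(s)`. Since `g_{γ+1}' = g_γ`,
termwise differentiation gives `a ∑ₖ a^k g_{αk+1}(t) = a E_α(a t^α)`. Both interchanges are
justified by the convergence of `∑ₖ x^k / Γ(αk+1)`, which follows from the ratio test and
Wendel's inequality `Γ(x + s) ≤ x^s Γ(x)`, a consequence of the log-convexity of `Γ`.
-/

open Real Filter

theorem Real.Gamma_add_le_rpow_mul_Gamma {x s : ℝ} (hx : 0 < x) (hs : s ∈ Ioo 0 1) :
    Gamma (x + s) ≤ x ^ s * Gamma x := by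
  obtain ⟨hs0, hs1⟩ := hs
  calc Gamma (x + s) = Gamma ((1 - s) * x + s * (x + 1)) := by ring_nf
    _ ≤ Gamma x ^ (1 - s) * Gamma (x + 1) ^ s :=
      Gamma_mul_add_mul_le_rpow_Gamma_mul_rpow_Gamma hx (by linarith) (by linarith) hs0 (by ring)
    _ = x ^ s * Gamma x := by
      rw [Gamma_add_one hx.ne', mul_rpow hx.le (Gamma_pos_of_pos hx).le, mul_left_comm,
        ← rpow_add (Gamma_pos_of_pos hx), sub_add_cancel, rpow_one]

theorem Real.rpow_mul_Gamma_le_two_mul_Gamma_add {x α : ℝ} (hx : 1 ≤ x) (hα : α ∈ Ioo 0 1) :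
    x ^ α * Gamma x ≤ 2 * Gamma (x + α) := by
  obtain ⟨hα0, hα1⟩ := hα
  have hx0 : 0 < x := by linarith
  have hwendel : x * Gamma x ≤ (x + α) ^ (1 - α) * Gamma (x + α) := by
    rw [← Gamma_add_one hx0.ne', show x + 1 = x + α + (1 - α) by ring]
    exact Gamma_add_le_rpow_mul_Gamma (by linarith) ⟨by linarith, by linarith⟩
  have hshift : (x + α) ^ (1 - α) ≤ 2 * x ^ (1 - α) := calc
    (x + α) ^ (1 - α) ≤ (2 * x) ^ (1 - α) := rpow_le_rpow (by linarith) (by linarith) (by linarith)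
    _ = 2 ^ (1 - α) * x ^ (1 - α) := mul_rpow (by norm_num) hx0.le
    _ ≤ 2 ^ (1 : ℝ) * x ^ (1 - α) := by
      gcongr
      · norm_num
      · linarith
    _ = 2 * x ^ (1 - α) := by rw [rpow_one]
  have hsplit : x ^ (1 - α) * x ^ α = x := by rw [← rpow_add hx0]; simp
  refine le_of_mul_le_mul_left ?_ (rpow_pos_of_pos hx0 (1 - α))
  calc x ^ (1 - α) * (x ^ α * Gamma x) = x * Gamma x := by rw [← mul_assoc, hsplit]
    _ ≤ (x + α) ^ (1 - α) * Gamma (x + α) := hwendel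
    _ ≤ 2 * x ^ (1 - α) * Gamma (x + α) := by gcongr
    _ = x ^ (1 - α) * (2 * Gamma (x + α)) := by ring

theorem Real.summable_pow_div_Gamma_mul_add_one {α : ℝ} (hα : α ∈ Ioo 0 1) (x : ℝ) :
    Summable fun k : ℕ => x ^ k / Gamma (α * k + 1) := by
  refine summable_of_ratio_norm_eventually_le (r := 1 / 2) (by norm_num) ?_
  have hlarge : Tendsto (fun k : ℕ => (α * k + 1) ^ α) atTop atTop :=
    (tendsto_rpow_atTop hα.1).comp <| tendsto_atTop_add_const_right _ _ <|
      tendsto_natCast_atTop_atTop.const_mul_atTop hα.1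
  filter_upwards [hlarge.eventually_ge_atTop (4 * |x|)] with k hk
  set y := α * k + 1
  have hy : 1 ≤ y := le_add_of_nonneg_left (mul_nonneg hα.1.le k.cast_nonneg)
  have hGy := Gamma_pos_of_pos (by linarith : 0 < y)
  have hGyα := Gamma_pos_of_pos (by linarith [hα.1] : 0 < y + α)
  have hratio : |x| * Gamma y ≤ Gamma (y + α) / 2 := by
    have := mul_le_mul_of_nonneg_right hk hGy.le
    linarith [rpow_mul_Gamma_le_two_mul_Gamma_add hy hα]
  have hnext : α * ↑(k + 1) + 1 = y + α := by push_cast; ring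
  rw [hnext, norm_div, norm_div, norm_pow, norm_pow, Real.norm_of_nonneg hGy.le,
    Real.norm_of_nonneg hGyα.le, Real.norm_eq_abs]
  calc |x| ^ (k + 1) / Gamma (y + α) = |x| ^ k / Gamma y * (|x| * Gamma y / Gamma (y + α)) := by
        field_simp; ring
    _ ≤ |x| ^ k / Gamma y * (1 / 2) := by
        refine mul_le_mul_of_nonneg_left ?_ (by positivity)
        rw [div_le_iff₀ hGyα]
        linarith
    _ = 1 / 2 * (|x| ^ k / Gamma y) := by ring

theorem integral_sub_rpow_mul_rpow {β γ s : ℝ} (hβ : 0 < β) (hγ : 0 < γ) (hs : 0 < s) :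
    ∫ τ in 0..s, (s - τ) ^ (β - 1) * τ ^ (γ - 1) =
      Gamma β * Gamma γ / Gamma (β + γ) * s ^ (β + γ - 1) := by
  apply Complex.ofReal_injective
  have key := Complex.betaIntegral_scaled γ β hs
  rw [Complex.betaIntegral_eq_Gamma_mul_div _ _ (by simpa) (by simpa)] at key
  rw [← intervalIntegral.integral_ofReal]
  convert key using 1
  · refine intervalIntegral.integral_congr fun τ hτ => ?_
    rw [uIcc_of_le hs.le] at hτ
    rw [Complex.ofReal_mul, Complex.ofReal_cpow (sub_nonneg.2 hτ.2), Complex.ofReal_cpow hτ.1,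
      mul_comm]
    push_cast
    rfl
  · rw [Complex.ofReal_mul, Complex.ofReal_cpow hs.le, mul_comm]
    push_cast [← Complex.Gamma_ofReal]
    ring_nf

section rlKernel

variable {β γ t : ℝ}

theorem rlKernel_nonneg (hβ : 0 < β) (ht : 0 ≤ t) : 0 ≤ rlKernel β t :=
  div_nonneg (rpow_nonneg ht _) (Gamma_pos_of_pos hβ).le

theorem rlKernel_add_one (hγ : γ ≠ 0) (ht : 0 ≤ t) : rlKernel (γ + 1) t = t / γ * rlKernel γ t := by
  have hpow : t ^ γ = t ^ (γ - 1) * t := by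
    rw [← rpow_add_one' ht (by simpa using hγ), sub_add_cancel]
  rw [rlKernel, rlKernel, Gamma_add_one hγ, add_sub_cancel_right, hpow]
  field_simp

theorem rlKernel_le_rlKernel (hγ : 1 ≤ γ) (ht : 0 ≤ t) {R : ℝ} (htR : t ≤ R) :
    rlKernel γ t ≤ rlKernel γ R :=
  div_le_div_of_nonneg_right (rpow_le_rpow ht htR (by linarith)) (Gamma_pos_of_pos (by linarith)).le

theorem hasDerivAt_rlKernel_add_one (hγ : γ ≠ 0) (ht : t ≠ 0) :
    HasDerivAt (rlKernel (γ + 1)) (rlKernel γ t) t := by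
  have hf : rlKernel (γ + 1) = fun s => s ^ γ / Gamma (γ + 1) := by
    funext s
    rw [rlKernel, add_sub_cancel_right]
  have hf' : rlKernel γ t = γ * t ^ (γ - 1) / Gamma (γ + 1) := by
    rw [rlKernel, Gamma_add_one hγ]
    field_simp
  rw [hf, hf']
  exact (hasDerivAt_rpow_const (Or.inl ht)).div_const _

theorem intervalIntegrable_rlKernel_mul_rlKernel (hβ : 0 < β) (hγ : 1 ≤ γ) (s : ℝ) :
    IntervalIntegrable (fun τ => rlKernel β (s - τ) * rlKernel γ τ) volume 0 s := by
  have hsing : IntervalIntegrable (fun τ => (s - τ) ^ (β - 1)) volume 0 s := by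
    have := (intervalIntegral.intervalIntegrable_rpow' (a := 0) (b := s) (r := β - 1)
      (by linarith)).comp_sub_left s
    rw [sub_zero, sub_self] at this
    exact this.symm
  exact (hsing.div_const _).mul_continuousOn
    ((continuous_rpow_const (by linarith)).div_const _).continuousOn

theorem integral_rlKernel_mul_rlKernel (hβ : 0 < β) (hγ : 0 < γ) {s : ℝ} (hs : 0 < s) :
    ∫ τ in 0..s, rlKernel β (s - τ) * rlKernel γ τ = rlKernel (β + γ) s := by
  simp only [rlKernel, div_mul_div_comm]
  rw [intervalIntegral.integral_div, integral_sub_rpow_mul_rpow hβ hγ hs]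
  have := (Gamma_pos_of_pos hβ).ne'
  have := (Gamma_pos_of_pos hγ).ne'
  field_simp

end rlKernel

section series

variable {c γ : ℕ → ℝ}

theorem integral_rlKernel_mul_tsum {β s : ℝ} (hβ : 0 < β) (hγ : ∀ k, 1 ≤ γ k) (hs : 0 < s)
    (hc : Summable fun k => |c k| * rlKernel (β + γ k) s) :
    ∫ τ in 0..s, rlKernel β (s - τ) * ∑' k, c k * rlKernel (γ k) τ =
      ∑' k, c k * rlKernel (β + γ k) s := by
  have hγ0 : ∀ k, 0 < γ k := fun k => by linarith [hγ k]
  let F : ℕ → ℝ → ℝ := fun k τ => c k * (rlKernel β (s - τ) * rlKernel (γ k) τ)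
  have hF_int : ∀ k, Integrable (F k) (volume.restrict (Ioc 0 s)) := fun k =>
    (intervalIntegrable_iff_integrableOn_Ioc_of_le hs.le).mp
      ((intervalIntegrable_rlKernel_mul_rlKernel hβ (hγ k) s).const_mul (c k))
  have hF_norm : ∀ k, ∫ τ in Ioc 0 s, ‖F k τ‖ = |c k| * rlKernel (β + γ k) s := by
    intro k
    have hnorm : ∀ τ ∈ Ioc 0 s, ‖F k τ‖ = |c k| * (rlKernel β (s - τ) * rlKernel (γ k) τ) :=
      fun τ hτ => by
        rw [Real.norm_eq_abs, abs_mul, abs_of_nonneg (mul_nonneg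
          (rlKernel_nonneg hβ (sub_nonneg.2 hτ.2)) (rlKernel_nonneg (hγ0 k) hτ.1.le))]
    rw [setIntegral_congr_fun measurableSet_Ioc hnorm, integral_const_mul,
      ← intervalIntegral.integral_of_le hs.le, integral_rlKernel_mul_rlKernel hβ (hγ0 k) hs]
  have hF_sum : Summable fun k => ∫ τ in Ioc 0 s, ‖F k τ‖ := by
    simpa only [hF_norm] using hc
  simp_rw [← tsum_mul_left, mul_left_comm (rlKernel β _)]
  rw [intervalIntegral.integral_of_le hs.le,
    ← integral_tsum_of_summable_integral_norm hF_int hF_sum]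
  refine tsum_congr fun k => ?_
  rw [integral_const_mul, ← intervalIntegral.integral_of_le hs.le,
    integral_rlKernel_mul_rlKernel hβ (hγ0 k) hs]

theorem hasDerivAt_tsum_mul_rlKernel_add_one (hγ : ∀ k, 1 ≤ γ k) {t R : ℝ} (ht : 0 < t)
    (htR : t < R) (hc : Summable fun k => |c k| * rlKernel (γ k) R) :
    HasDerivAt (fun s => ∑' k, c k * rlKernel (γ k + 1) s) (∑' k, c k * rlKernel (γ k) t) t := by
  have hγ0 : ∀ k, γ k ≠ 0 := fun k => by linarith [hγ k]
  have hbound : ∀ k, ∀ s ∈ Ioo 0 R, ‖c k * rlKernel (γ k) s‖ ≤ |c k| * rlKernel (γ k) R :=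
    fun k s hs => by
      rw [Real.norm_eq_abs, abs_mul, abs_of_nonneg (rlKernel_nonneg (by linarith [hγ k]) hs.1.le)]
      exact mul_le_mul_of_nonneg_left (rlKernel_le_rlKernel (hγ k) hs.1.le hs.2.le) (abs_nonneg _)
  have hsummable : Summable fun k => c k * rlKernel (γ k + 1) t := by
    refine (hc.mul_left t).of_norm_bounded fun k => ?_
    rw [rlKernel_add_one (hγ0 k) ht.le, mul_left_comm, norm_mul, Real.norm_of_nonneg
      (div_nonneg ht.le (by linarith [hγ k]))]
    exact mul_le_mul (div_le_self ht.le (hγ k)) (hbound k t ⟨ht, htR⟩) (norm_nonneg _) ht.le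
  exact hasDerivAt_tsum_of_isPreconnected hc isOpen_Ioo isPreconnected_Ioo
    (fun k s hs => (hasDerivAt_rlKernel_add_one (hγ0 k) hs.1.ne').const_mul (c k))
    hbound ⟨ht, htR⟩ hsummable ⟨ht, htR⟩

end series

theorem mittagLeffler_zero (α : ℝ) : mittagLeffler α 0 = 1 := by
  rw [mittagLeffler, tsum_eq_single 0 fun k hk => by rw [zero_pow hk, zero_div]]
  simp

theorem pow_mul_rlKernel_mul_add_one (α a : ℝ) {t : ℝ} (ht : 0 ≤ t) (k : ℕ) :
    a ^ k * rlKernel (α * k + 1) t = (a * t ^ α) ^ k / Gamma (α * k + 1) := by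
  rw [rlKernel, add_sub_cancel_right, mul_pow, ← rpow_natCast (t ^ α), ← rpow_mul ht, mul_div_assoc]

theorem summable_pow_mul_rlKernel {α : ℝ} (hα : α ∈ Ioo 0 1) (a : ℝ) {t : ℝ} (ht : 0 ≤ t) :
    Summable fun k : ℕ => a ^ k * rlKernel (α * k + 1) t := by
  simpa only [pow_mul_rlKernel_mul_add_one α a ht] using
    summable_pow_div_Gamma_mul_add_one hα (a * t ^ α)

theorem mittagLeffler_mul_rpow_eq_tsum (α a : ℝ) {t : ℝ} (ht : 0 ≤ t) :
    mittagLeffler α (a * t ^ α) = ∑' k : ℕ, a ^ k * rlKernel (α * k + 1) t := by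
  simp only [mittagLeffler, pow_mul_rlKernel_mul_add_one α a ht]

theorem mittagLeffler_mul_rpow_sub_one {α : ℝ} (hα : α ∈ Ioo 0 1) (a : ℝ) {t : ℝ} (ht : 0 ≤ t) :
    mittagLeffler α (a * t ^ α) - 1 = ∑' k : ℕ, a ^ (k + 1) * rlKernel (α * ↑(k + 1) + 1) t := by
  rw [mittagLeffler_mul_rpow_eq_tsum α a ht, (summable_pow_mul_rlKernel hα a ht).tsum_eq_zero_add]
  simp [rlKernel]

theorem integral_rlKernel_mul_mittagLeffler_sub_one {α : ℝ} (hα : α ∈ Ioo 0 1) (a : ℝ) {s : ℝ}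
    (hs : 0 < s) :
    ∫ τ in 0..s, rlKernel (1 - α) (s - τ) * (mittagLeffler α (a * τ ^ α) - 1) =
      ∑' k : ℕ, a ^ (k + 1) * rlKernel (α * k + 1 + 1) s := by
  have ⟨hα0, hα1⟩ := hα
  have hγ : ∀ k : ℕ, 1 ≤ α * ↑(k + 1) + 1 := fun k => le_add_of_nonneg_left (by positivity)
  have hexp : ∀ k : ℕ, 1 - α + (α * ↑(k + 1) + 1) = α * k + 1 + 1 := fun k => by push_cast; ring
  have hsummable :
      Summable fun k : ℕ => |a ^ (k + 1)| * rlKernel (1 - α + (α * ↑(k + 1) + 1)) s := by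
    refine ((summable_pow_mul_rlKernel hα |a| hs.le).mul_left (|a| * s)).of_nonneg_of_le
      (fun k => mul_nonneg (abs_nonneg _) (rlKernel_nonneg (by linarith [hγ k]) hs.le)) fun k => ?_
    have hk : 1 ≤ α * k + 1 := le_add_of_nonneg_left (by positivity)
    have hker := rlKernel_nonneg (by linarith) hs.le (β := α * k + 1)
    rw [hexp, rlKernel_add_one (by positivity) hs.le, abs_pow]
    calc |a| ^ (k + 1) * (s / (α * k + 1) * rlKernel (α * k + 1) s)
        = |a| * (|a| ^ k * rlKernel (α * k + 1) s) * (s / (α * k + 1)) := by ring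
      _ ≤ |a| * (|a| ^ k * rlKernel (α * k + 1) s) * s := by gcongr; exact div_le_self hs.le hk
      _ = |a| * s * (|a| ^ k * rlKernel (α * k + 1) s) := by ring
  rw [intervalIntegral.integral_congr fun τ hτ => by
      rw [mittagLeffler_mul_rpow_sub_one hα a (uIcc_of_le hs.le ▸ hτ).1],
    integral_rlKernel_mul_tsum (by linarith) hγ hs hsummable]
  simp only [hexp]

theorem hasDerivAt_integral_rlKernel_mul_mittagLeffler_sub_one {α : ℝ} (hα : α ∈ Ioo 0 1)
    (a : ℝ) {t : ℝ} (ht : 0 < t) :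
    HasDerivAt (fun s => ∫ τ in 0..s, rlKernel (1 - α) (s - τ) * (mittagLeffler α (a * τ ^ α) - 1))
      (a * mittagLeffler α (a * t ^ α)) t := by
  have hγ : ∀ k : ℕ, 1 ≤ α * k + 1 := fun k =>
    le_add_of_nonneg_left (mul_nonneg hα.1.le k.cast_nonneg)
  have hsummable : Summable fun k : ℕ => |a ^ (k + 1)| * rlKernel (α * k + 1) (t + 1) := by
    simpa only [abs_mul, abs_pow, pow_succ', mul_assoc] using
      (summable_pow_mul_rlKernel hα |a| (t := t + 1) (by linarith)).mul_left |a|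
  have hderiv := hasDerivAt_tsum_mul_rlKernel_add_one hγ ht (lt_add_one t) hsummable
  rw [mittagLeffler_mul_rpow_eq_tsum α a ht.le, ← tsum_mul_left]
  simp only [pow_succ', mul_assoc] at hderiv
  refine hderiv.congr_of_eventuallyEq ?_
  filter_upwards [Ioi_mem_nhds ht] with s hs
  rw [integral_rlKernel_mul_mittagLeffler_sub_one hα a hs]
  simp only [pow_succ', mul_assoc]

theorem mittagLeffler_solves_fractional_relaxation_general
    (α μ V₀ : ℝ) (hα : α ∈ Set.Ioo (0 : ℝ) 1)
    (V : ℝ → ℝ) (hV : ∀ t ≥ (0 : ℝ), V t = V₀ * mittagLeffler α (-μ * t ^ α)) :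
    V 0 = V₀ ∧
    ∀ t > (0 : ℝ),
      HasDerivAt (fun s => ∫ τ in (0 : ℝ)..s, rlKernel (1 - α) (s - τ) * (V τ - V₀))
        (-μ * V t) t := by
  refine ⟨by rw [hV 0 le_rfl, zero_rpow hα.1.ne', mul_zero, mittagLeffler_zero, mul_one],
    fun t ht => ?_⟩
  have hintegrand : ∀ s, 0 ≤ s → ∀ τ ∈ uIcc 0 s,
      rlKernel (1 - α) (s - τ) * (V τ - V₀) =
        V₀ * (rlKernel (1 - α) (s - τ) * (mittagLeffler α (-μ * τ ^ α) - 1)) := by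
    intro s hs τ hτ
    rw [hV τ (uIcc_of_le hs ▸ hτ).1]
    ring
  rw [hV t ht.le, mul_left_comm]
  refine ((hasDerivAt_integral_rlKernel_mul_mittagLeffler_sub_one hα (-μ) ht).const_mul V₀)
    |>.congr_of_eventuallyEq ?_
  filter_upwards [Ioi_mem_nhds ht] with s hs
  rw [intervalIntegral.integral_congr (hintegrand s hs.le), intervalIntegral.integral_const_mul]

/-- The function `V(t) = V₀ E_α(-μ t^α)` solves the fractional relaxation equation
`∂_t^α (V - V₀) + μ V = 0` on `(0,∞)` with `V(0) = V₀`, where `∂_t^α` is the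
Riemann–Liouville fractional derivative. -/
theorem mittagLeffler_solves_fractional_relaxation
    (α μ V₀ : ℝ) (hα : α ∈ Set.Ioo (0 : ℝ) 1) (hμ : 0 ≤ μ)
    (V : ℝ → ℝ) (hV : ∀ t ≥ (0 : ℝ), V t = V₀ * mittagLeffler α (-μ * t ^ α)) :
    V 0 = V₀ ∧
    ∀ t > (0 : ℝ),
      HasDerivAt (fun s => ∫ τ in (0 : ℝ)..s, rlKernel (1 - α) (s - τ) * (V τ - V₀))
        (-μ * V t) t :=
  mittagLeffler_solves_fractional_relaxation_general α μ V₀ hα V hV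
end

section
/- Let α > 0 and μ ∈ ℝ. Then for every t ≥ 0, E_α(−μ t^α) = 1 − μ ∫₀ᵗ g_α(t−s) · E_α(−μ s^α) ds; that is, the function u(t) = E_α(−μ t^α) solves the Volterra integral equation u(t) = 1 − μ (g_α ∗ u)(t) on [0,∞). -/
open MeasureTheory Set

/-!
Expand `u(s) = E_α(-μ s^α) = Σ (-μ)^k s^(αk)/Γ(αk+1)` and convolve termwise: by the Beta integral,
`g_α ∗ s^(αk)/Γ(αk+1) = t^(αk+α)/Γ(αk+α+1)`, hence
`μ (g_α ∗ u)(t) = -Σ (-μ t^α)^(k+1)/Γ(α(k+1)+1) = 1 - u(t)`.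
The interchange of sum and integral is legitimate because each term is `(-μ)^k` times a
nonnegative function, and the resulting series `t^α Σ (|μ| t^α)^k/Γ(αk+α+1)` converges by the
ratio test, using the log-convexity bound `Γ(x)(x-1)^α ≤ Γ(x+α)`.
-/

open Real Filter

lemma Real.Gamma_mul_rpow_le_Gamma_add {x a : ℝ} (hx : 1 < x) (ha : 0 < a) :
    Gamma x * (x - 1) ^ a ≤ Gamma (x + a) := by
  have hx₀ : 0 < x - 1 := by linarith
  have hΓx := Gamma_pos_of_pos (by linarith : 0 < x)
  have hΓ : log (Gamma x) = log (x - 1) + log (Gamma (x - 1)) := by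
    rw [← log_mul hx₀.ne' (Gamma_pos_of_pos hx₀).ne', ← Gamma_add_one hx₀.ne', sub_add_cancel]
  -- log Γ is convex and its slope on `[x - 1, x]` is `log (x - 1)`
  have hslope := convexOn_log_Gamma.slope_mono_adjacent (x := x - 1) (y := x) (z := x + a)
    (by simp [hx₀]) (by simp; linarith) (by linarith) (by linarith)
  simp only [Function.comp, hΓ, sub_sub_cancel, add_sub_cancel_left, div_one] at hslope
  rw [← log_le_log_iff (by positivity) (Gamma_pos_of_pos (by linarith)),
    log_mul hΓx.ne' (rpow_pos_of_pos hx₀ a).ne', log_rpow hx₀, hΓ]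
  have := (le_div_iff₀ ha).mp hslope
  linarith

lemma Real.summable_pow_div_Gamma {α : ℝ} (hα : 0 < α) (β x : ℝ) :
    Summable fun k : ℕ ↦ x ^ k / Gamma (α * k + β) := by
  refine summable_of_ratio_norm_eventually_le (r := 1 / 2) (by norm_num) ?_
  have hlin : Tendsto (fun k : ℕ ↦ α * k + β - 1) atTop atTop :=
    tendsto_atTop_add_const_right _ _
      ((tendsto_natCast_atTop_atTop.const_mul_atTop hα).atTop_add tendsto_const_nhds)
  filter_upwards [((tendsto_rpow_atTop hα).comp hlin).eventually_ge_atTop (2 * |x|),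
    hlin.eventually_ge_atTop 1] with k hpow hk
  simp only [Function.comp] at hpow
  have hΓ : 0 < Gamma (α * k + β) := Gamma_pos_of_pos (by linarith)
  have hP : 0 < (α * k + β - 1) ^ α := rpow_pos_of_pos (by linarith) _
  -- the ratio of consecutive terms is at most `|x| / (α k + β - 1) ^ α ≤ 1 / 2`
  have hstep : Gamma (α * k + β) * (α * k + β - 1) ^ α ≤ Gamma (α * ↑(k + 1) + β) := by
    convert Gamma_mul_rpow_le_Gamma_add (x := α * k + β) (by linarith) hα using 2
    push_cast; ring
  have hΓ' : 0 < Gamma (α * ↑(k + 1) + β) := Gamma_pos_of_pos (by push_cast; linarith)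
  rw [norm_div, norm_div, norm_of_nonneg hΓ.le, norm_of_nonneg hΓ'.le, norm_pow, norm_pow,
    pow_succ]
  calc ‖x‖ ^ k * ‖x‖ / Gamma (α * ↑(k + 1) + β)
      ≤ ‖x‖ ^ k * ‖x‖ / (Gamma (α * k + β) * (α * k + β - 1) ^ α) := by
        gcongr
    _ = ‖x‖ ^ k / Gamma (α * k + β) * (‖x‖ / (α * k + β - 1) ^ α) := by
        field_simp
    _ ≤ ‖x‖ ^ k / Gamma (α * k + β) * (1 / 2) := by
        gcongr ‖x‖ ^ k / Gamma (α * k + β) * ?_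
        rw [div_le_div_iff₀ hP two_pos, norm_eq_abs]
        linarith
    _ = 1 / 2 * (‖x‖ ^ k / Gamma (α * k + β)) := mul_comm _ _

lemma Real.integral_rpow_mul_sub_rpow {a b t : ℝ} (ha : 0 < a) (hb : 0 < b) (ht : 0 < t) :
    ∫ s in 0..t, s ^ (a - 1) * (t - s) ^ (b - 1) =
      Gamma a * Gamma b / Gamma (a + b) * t ^ (a + b - 1) := by
  have hβ : Complex.betaIntegral a b = ↑(Gamma a * Gamma b / Gamma (a + b)) := by
    have h := Complex.Gamma_mul_Gamma_eq_betaIntegral (s := a) (t := b) (by simpa) (by simpa)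
    rw [← Complex.ofReal_add, Complex.Gamma_ofReal, Complex.Gamma_ofReal,
      Complex.Gamma_ofReal] at h
    have hne : (Gamma (a + b) : ℂ) ≠ 0 := mod_cast (Gamma_pos_of_pos (add_pos ha hb)).ne'
    push_cast
    rw [h, mul_div_cancel_left₀ _ hne]
  apply Complex.ofReal_injective
  rw [← intervalIntegral.integral_ofReal]
  calc ∫ s in 0..t, ((s ^ (a - 1) * (t - s) ^ (b - 1) : ℝ) : ℂ)
      = ∫ s in 0..t, (s : ℂ) ^ ((a : ℂ) - 1) * ((t : ℂ) - s) ^ ((b : ℂ) - 1) := by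
        refine intervalIntegral.integral_congr fun s hs ↦ ?_
        rw [uIcc_of_le ht.le] at hs
        push_cast [Complex.ofReal_cpow hs.1, Complex.ofReal_cpow (sub_nonneg.mpr hs.2)]
        rfl
    _ = _ := by
        rw [Complex.betaIntegral_scaled _ _ ht, hβ, Complex.ofReal_mul, mul_comm,
          Complex.ofReal_cpow ht.le]
        push_cast
        rfl

lemma mittagLeffler_eq_one_add_mul {α : ℝ} (hα : 0 < α) (x : ℝ) :
    mittagLeffler α x = 1 + x * ∑' k : ℕ, x ^ k / Gamma (α * k + α + 1) := by
  rw [mittagLeffler, (summable_pow_div_Gamma hα 1 x).tsum_eq_zero_add, ← tsum_mul_left]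
  congr 1
  · simp
  · refine tsum_congr fun k ↦ ?_
    rw [pow_succ', mul_div_assoc]
    push_cast
    ring_nf

lemma integral_rlKernel_mul_rpow {α γ t : ℝ} (hα : 0 < α) (hγ : -1 < γ) (ht : 0 < t) :
    ∫ s in 0..t, rlKernel α (t - s) * (s ^ γ / Gamma (γ + 1)) =
      t ^ (γ + α) / Gamma (γ + α + 1) := by
  have hγ₁ : 0 < γ + 1 := by linarith
  have hΓα := (Gamma_pos_of_pos hα).ne'
  have hΓγ := (Gamma_pos_of_pos hγ₁).ne'
  simp_rw [rlKernel, div_mul_div_comm, mul_comm ((_ : ℝ) ^ (α - 1)), intervalIntegral.integral_div]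
  have hβ := integral_rpow_mul_sub_rpow hγ₁ hα ht
  rw [add_sub_cancel_right, show γ + 1 + α - 1 = γ + α by ring,
    show γ + 1 + α = γ + α + 1 by ring] at hβ
  rw [hβ]
  field_simp

lemma intervalIntegrable_rlKernel_mul_rpow {α γ t : ℝ} (hα : 0 < α) (hγ : -1 < γ) (ht : 0 < t) :
    IntervalIntegrable (fun s ↦ rlKernel α (t - s) * (s ^ γ / Gamma (γ + 1))) volume 0 t := by
  -- a non-integrable function would have integral `0`
  refine intervalIntegral.intervalIntegrable_of_integral_ne_zero ?_
  rw [integral_rlKernel_mul_rpow hα hγ ht]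
  have := Gamma_pos_of_pos (show 0 < γ + α + 1 by linarith)
  positivity

lemma integral_rlKernel_mul_mittagLeffler {α t : ℝ} (hα : 0 < α) (ht : 0 < t) (c : ℝ) :
    ∫ s in 0..t, rlKernel α (t - s) * mittagLeffler α (c * s ^ α) =
      t ^ α * ∑' k : ℕ, (c * t ^ α) ^ k / Gamma (α * k + α + 1) := by
  set P : ℕ → ℝ → ℝ := fun k s ↦ rlKernel α (t - s) * (s ^ (α * k) / Gamma (α * k + 1))
  have hγ (k : ℕ) : -1 < α * k := by linarith [show 0 ≤ α * k by positivity]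
  have hP_int (k : ℕ) : IntegrableOn (P k) (Ioc 0 t) :=
    (intervalIntegrable_iff_integrableOn_Ioc_of_le ht.le).mp
      (intervalIntegrable_rlKernel_mul_rpow hα (hγ k) ht)
  have hP_integral (k : ℕ) :
      ∫ s in Ioc 0 t, P k s = t ^ α * (t ^ α) ^ k / Gamma (α * k + α + 1) := by
    rw [← intervalIntegral.integral_of_le ht.le, integral_rlKernel_mul_rpow hα (hγ k) ht,
      rpow_add ht, rpow_mul_natCast ht.le, mul_comm]
  have hP_nonneg (k : ℕ) : ∀ s ∈ Ioc 0 t, 0 ≤ P k s := fun s hs ↦ by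
    have := Gamma_pos_of_pos hα
    have := Gamma_pos_of_pos (show 0 < α * k + 1 by linarith [hγ k])
    have := rpow_nonneg (sub_nonneg.mpr hs.2) (α - 1)
    have := rpow_nonneg hs.1.le (α * k)
    simp only [P, rlKernel]
    positivity
  have hseries : ∀ s ∈ Ioc 0 t,
      rlKernel α (t - s) * mittagLeffler α (c * s ^ α) = ∑' k, c ^ k * P k s := fun s hs ↦ by
    simp_rw [mittagLeffler, ← tsum_mul_left, mul_pow, ← rpow_mul_natCast hs.1.le, P]
    exact tsum_congr fun k ↦ by ring
  have hnorm_summable : Summable fun k ↦ ∫ s in Ioc 0 t, ‖c ^ k * P k s‖ := by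
    have h := (summable_pow_div_Gamma hα (α + 1) (|c| * t ^ α)).mul_left (t ^ α)
    refine h.congr fun k ↦ ?_
    rw [setIntegral_congr_fun measurableSet_Ioc fun s hs ↦ by
      rw [norm_mul, norm_pow, norm_of_nonneg (hP_nonneg k s hs), norm_eq_abs],
      integral_const_mul, hP_integral, ← add_assoc]
    ring
  rw [intervalIntegral.integral_of_le ht.le, setIntegral_congr_fun measurableSet_Ioc hseries,
    ← integral_tsum_of_summable_integral_norm (fun k ↦ (hP_int k).const_mul _) hnorm_summable,
    ← tsum_mul_left]
  refine tsum_congr fun k ↦ ?_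
  rw [integral_const_mul, hP_integral]
  ring

/-- `u(t) = E_α(-μ t^α)` solves the Volterra integral equation `u = 1 - μ (g_α ∗ u)`
on `[0,∞)`. -/
theorem mittagLeffler_volterra_equation (α μ : ℝ) (hα : 0 < α) :
    ∀ t ≥ (0 : ℝ),
      mittagLeffler α (-μ * t ^ α) =
        1 - μ * ∫ s in (0 : ℝ)..t, rlKernel α (t - s) * mittagLeffler α (-μ * s ^ α) := by
  intro t ht
  rcases ht.eq_or_lt with rfl | ht
  · simp [mittagLeffler_eq_one_add_mul hα, zero_rpow hα.ne']
  · rw [integral_rlKernel_mul_mittagLeffler hα ht, mittagLeffler_eq_one_add_mul hα]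
    ring
end
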